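/- Consider the objective F(x) = (μ/2)(x₁ − b)² + (H/2)(x₂ − b)² + (L/2)((x₃ − c)² + [x₃ − c]₊²) on ℝ³ with stochastic gradient ∇f(x; z) = ∇F(x) + (0, 0, z)ᵀ, where P[z = σ] = P[z = −σ] = 1/2, and with c ≥ 0. Let K ≥ 2, M, R ≥ 1, and let x̂ (the averaged iterate after the final round) be the output of local SGD with M machines, K local steps per round, R rounds, fixed stepsize η ≤ 1/(2L), initialized at 0. If c ≥ ησ/48 or η ≥ 2/(LRK), then E[ (L/2)((x̂₃ − c)² + [x̂₃ − c]₊²) ] ≥ Lη²σ²/4608. -/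

import Mathlib

/-!
Only the third coordinate matters: on it every machine runs a one-dimensional local SGD with
step map `v ↦ v - ηL(v - c) - ηL[v - c]₊` and noise `-ηz`. For these third coordinates `uₜᵐ`,
the total deficit `b_t = ∑ₘ (c - E uₜᵐ)` and `q_t = ∑ₘ E[uₜᵐ - c]₊`, linearity of expectation gives
`b_{t+1} = (1 - ηL) b_t + ηL q_t`. After a local step, the fresh independent noise has pushed
the iterate up by `ησ` with probability `1/2`, so `q_t ≥ (Mησ - b_t)/2`; only right after a
communication step is this bound missing. Hence `b` grows linearly while it is below `Mησ/48`,
which it therefore reaches by time `KR` when `ηLRK ≥ 2` (and from the start when `c ≥ ησ/48`),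
and afterwards it stays above that threshold at the end of every round. So
`E[x̂₃ - c] ≤ -ησ/48`, and the objective is at least
`(L/2) E[(x̂₃ - c)²] ≥ (L/2) (E[x̂₃ - c])² ≥ Lη²σ²/4608`.
-/

open MeasureTheory ProbabilityTheory
open scoped BigOperators

noncomputable def twoPoint (σ : ℝ) : Measure ℝ :=
  (2⁻¹ : ENNReal) • Measure.dirac σ + (2⁻¹ : ENNReal) • Measure.dirac (-σ)

/-- The stochastic gradient `∇f(x; z) = ∇F(x) + (0,0,z)ᵀ` of the hard instance
`F(x) = (μ/2)(x₁−b)² + (H/2)(x₂−b)² + (L/2)((x₃−c)² + [x₃−c]₊²)`. -/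
noncomputable def hardGrad (μ H L b c : ℝ) (x : Fin 3 → ℝ) (zv : ℝ) : Fin 3 → ℝ :=
  ![μ * (x 0 - b), H * (x 1 - b), L * (x 2 - c) + L * max (x 2 - c) 0 + zv]

lemma Nat.succ_mod_ne_zero_of_mod_eq_zero {n K : ℕ} (hK : 2 ≤ K) (h : n % K = 0) :
    (n + 1) % K ≠ 0 := by
  obtain ⟨k, rfl⟩ := Nat.dvd_of_mod_eq_zero h
  rw [Nat.mul_add_mod, Nat.mod_eq_of_lt (by omega)]
  exact one_ne_zero

structure IsDeficitRecursion (K : ℕ) (β s : ℝ) (b q : ℕ → ℝ) : Prop where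
  succ : ∀ t, b (t + 1) = (1 - β) * b t + β * q t
  nonneg : ∀ t, 0 ≤ q t
  le_of_mod_ne_zero : ∀ t, t % K ≠ 0 → (s - b t) / 2 ≤ q t

namespace IsDeficitRecursion

variable {K : ℕ} {β s : ℝ} {b q : ℕ → ℝ}

lemma mul_le_succ (h : IsDeficitRecursion K β s b q) (hβ : 0 ≤ β) (t : ℕ) :
    (1 - β) * b t ≤ b (t + 1) := by
  rw [h.succ]
  nlinarith [h.nonneg t]

lemma add_le_succ (h : IsDeficitRecursion K β s b q) (hβ : 0 ≤ β) {t : ℕ} (ht : t % K ≠ 0) :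
    b t + β * (s - 3 * b t) / 2 ≤ b (t + 1) := by
  rw [h.succ]
  nlinarith [h.le_of_mod_ne_zero t ht]

/-- Below the threshold `s/48` a local step gains at least `45βs/96` and a communication step
loses at most `βs/48`; the potential `10t - 11·[t ≢ 0 mod K]` (in units of `βs/48`) absorbs
both. -/
lemma lower_bound_of_forall_lt (h : IsDeficitRecursion K β s b q) (hβ : 0 ≤ β) (hs : 0 ≤ s)
    (hK : 2 ≤ K) (hb0 : 0 ≤ b 0) (n : ℕ) (hlt : ∀ t < n, b t < s / 48) :
    β * (s / 48) * (10 * n - if n % K = 0 then 0 else 11) ≤ b n := by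
  induction n with
  | zero => simpa using hb0
  | succ n ih =>
    have hprev := ih fun t ht => hlt t (by omega)
    have hbn := hlt n (by omega)
    have hβs : 0 ≤ β * s := mul_nonneg hβ hs
    by_cases hn : n % K = 0
    · rw [if_pos hn] at hprev
      rw [if_neg (Nat.succ_mod_ne_zero_of_mod_eq_zero hK hn)]
      push_cast
      nlinarith [h.mul_le_succ hβ n, mul_nonneg hβ (by linarith : 0 ≤ s / 48 - b n)]
    · rw [if_neg hn] at hprev
      have hstep := h.add_le_succ hβ hn
      have : β * (45 * (s / 48)) ≤ β * (s - 3 * b n) := by gcongr; linarith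
      split_ifs <;> push_cast <;> nlinarith

lemma exists_threshold_le (h : IsDeficitRecursion K β s b q) (hβ : 0 ≤ β) (hs : 0 ≤ s)
    (hK : 2 ≤ K) (hb0 : 0 ≤ b 0) {R : ℕ} (hRK : 2 ≤ β * (K * R)) :
    ∃ t ≤ K * R, s / 48 ≤ b t := by
  by_contra! hlt
  have hT := h.lower_bound_of_forall_lt hβ hs hK hb0 (K * R) fun t ht => hlt t ht.le
  rw [if_pos (Nat.mul_mod_right K R)] at hT
  push_cast at hT
  nlinarith [hlt (K * R) le_rfl]

/-- A communication step keeps at least the fraction `1 - β` of the threshold, and the local step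
after it, pushed up by the noise, restores the full threshold. -/
lemma threshold_invariant (h : IsDeficitRecursion K β s b q) (hβ0 : 0 ≤ β) (hβ : β ≤ 1 / 2)
    (hs : 0 ≤ s) (hK : 2 ≤ K) {t₀ : ℕ} (ht₀ : s / 48 ≤ b t₀) :
    ∀ t, t₀ ≤ t → (1 - β) * (s / 48) ≤ b t ∧ (t % K = 0 → s / 48 ≤ b t) := by
  refine Nat.le_induction ⟨by nlinarith, fun _ => ht₀⟩ fun n _ ⟨hlow, hhigh⟩ => ?_
  by_cases hn : n % K = 0
  · refine ⟨?_, fun h' => absurd h' (Nat.succ_mod_ne_zero_of_mod_eq_zero hK hn)⟩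
    nlinarith [h.mul_le_succ hβ0 n, hhigh hn]
  · have hnext : s / 48 ≤ b (n + 1) := by
      have hstep := h.add_le_succ hβ0 hn
      by_cases hbn : b n ≤ s / 3
      · nlinarith [mul_nonneg (by linarith : (0:ℝ) ≤ 1 - 3 * β / 2)
          (by linarith : (0:ℝ) ≤ b n - (1 - β) * (s / 48)), mul_nonneg hβ0 hs,
          mul_nonneg (mul_nonneg hβ0 hβ0) hs]
      · nlinarith [h.mul_le_succ hβ0 n]
    exact ⟨by nlinarith, fun _ => hnext⟩

lemma threshold_le_at_round_end (h : IsDeficitRecursion K β s b q) (hβ0 : 0 ≤ β) (hβ : β ≤ 1 / 2)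
    (hs : 0 ≤ s) (hK : 2 ≤ K) (hb0 : 0 ≤ b 0) {R : ℕ}
    (hcase : s / 48 ≤ b 0 ∨ 2 ≤ β * (K * R)) : s / 48 ≤ b (K * R) := by
  obtain ⟨t₀, ht₀R, ht₀⟩ : ∃ t ≤ K * R, s / 48 ≤ b t :=
    hcase.elim (fun h0 => ⟨0, Nat.zero_le _, h0⟩) (h.exists_threshold_le hβ0 hs hK hb0)
  exact (h.threshold_invariant hβ0 hβ hs hK ht₀ (K * R) ht₀R).2 (Nat.mul_mod_right K R)

end IsDeficitRecursion

section TwoPoint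

variable {Ω : Type*} [MeasurableSpace Ω] {P : Measure Ω} {σ : ℝ} {Z : Ω → ℝ}

lemma integral_twoPoint (f : ℝ → ℝ) : ∫ y, f y ∂twoPoint σ = (f σ + f (-σ)) / 2 := by
  rw [twoPoint, integral_add_measure ((integrable_dirac (by simp)).smul_measure (by simp))
      ((integrable_dirac (by simp)).smul_measure (by simp)),
    integral_smul_measure, integral_smul_measure, integral_dirac, integral_dirac]
  simp only [ENNReal.toReal_inv, ENNReal.toReal_ofNat, smul_eq_mul]
  ring

lemma integral_comp_of_map_eq_twoPoint (hZ : Measurable Z) (hlaw : P.map Z = twoPoint σ)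
    {f : ℝ → ℝ} (hf : Measurable f) : ∫ ω, f (Z ω) ∂P = (f σ + f (-σ)) / 2 := by
  rw [← integral_twoPoint, ← hlaw, integral_map hZ.aemeasurable hf.aestronglyMeasurable]

lemma integral_eq_zero_of_map_eq_twoPoint (hZ : Measurable Z) (hlaw : P.map Z = twoPoint σ) :
    ∫ ω, Z ω ∂P = 0 := by
  simpa using integral_comp_of_map_eq_twoPoint hZ hlaw measurable_id

lemma memLp_of_map_eq_twoPoint [IsFiniteMeasure P] (hZ : Measurable Z)
    (hlaw : P.map Z = twoPoint σ) (p : ENNReal) : MemLp Z p P := by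
  have hbound : ∀ᵐ y ∂twoPoint σ, ‖y‖ ≤ |σ| := by
    simp [twoPoint, ae_add_measure_iff]
  rw [← hlaw] at hbound
  exact MemLp.of_bound hZ.aestronglyMeasurable _ (ae_of_ae_map hZ.aemeasurable hbound)

/-- On the event `Z = -σ`, of probability `1/2` and independent of `Y`, the positive part is at
least `Y + ησ`. -/
lemma le_integral_max_sub_mul_of_indepFun [IsProbabilityMeasure P] {Y : Ω → ℝ}
    (hY : Integrable Y P) (hZ : Measurable Z) (hlaw : P.map Z = twoPoint σ)
    (hYZ : IndepFun Y Z P) (hσ : σ ≠ 0) (η : ℝ) :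
    (∫ ω, Y ω ∂P + η * σ) / 2 ≤ ∫ ω, max (Y ω - η * Z ω) 0 ∂P := by
  set ι : ℝ → ℝ := Set.indicator {-σ} 1
  have hι : Measurable ι := measurable_one.indicator (measurableSet_singleton _)
  have hι_bound : ∀ y, ‖ι y‖ ≤ 1 := fun y => by
    simp only [ι, Set.indicator]
    split_ifs <;> simp
  have hι_mean : ∫ ω, ι (Z ω) ∂P = 1 / 2 := by
    rw [integral_comp_of_map_eq_twoPoint hZ hlaw hι]
    have : σ ≠ -σ := fun h => hσ (by linarith)
    simp [ι, this]
  have hYσ : Integrable (fun ω => Y ω + η * σ) P := hY.add (integrable_const _)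
  have hle : ∀ ω, (Y ω + η * σ) * ι (Z ω) ≤ max (Y ω - η * Z ω) 0 := fun ω => by
    by_cases hz : Z ω = -σ
    · simp [ι, hz, mul_neg]
    · simp [ι, hz]
  calc (∫ ω, Y ω ∂P + η * σ) / 2
      = (∫ ω, Y ω + η * σ ∂P) * ∫ ω, ι (Z ω) ∂P := by
        rw [hι_mean, integral_add hY (integrable_const _), integral_const]
        simp only [probReal_univ, smul_eq_mul, one_mul, one_div]
        ring
    _ = ∫ ω, (Y ω + η * σ) * ι (Z ω) ∂P :=
        ((hYZ.comp (measurable_add_const (η * σ)) hι).integral_mul_eq_mul_integral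
          hYσ.aestronglyMeasurable (hι.comp hZ).aestronglyMeasurable).symm
    _ ≤ ∫ ω, max (Y ω - η * Z ω) 0 ∂P :=
        integral_mono (hYσ.mul_bdd (hι.comp hZ).aestronglyMeasurable
            (ae_of_all _ fun ω => hι_bound (Z ω)))
          (hY.sub (((memLp_of_map_eq_twoPoint hZ hlaw 1).integrable le_rfl).const_mul η)).pos_part
          hle

end TwoPoint

lemma MeasureTheory.MemLp.comp_of_abs_sub_le {Ω : Type*} [MeasurableSpace Ω] {P : Measure Ω}
    [IsFiniteMeasure P] {p : ENNReal} {Y : Ω → ℝ} {g : ℝ → ℝ} {c : ℝ} (hY : MemLp Y p P)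
    (hg : Measurable g) (hgc : ∀ v, |g v - c| ≤ |v - c|) : MemLp (fun ω => g (Y ω)) p P := by
  have h := (hY.sub (memLp_const c)).of_le (f := fun ω => g (Y ω) - c)
    ((hg.comp_aemeasurable hY.aemeasurable).sub aemeasurable_const).aestronglyMeasurable
    (ae_of_all _ fun ω => by simpa using hgc (Y ω))
  convert h.add (memLp_const c) using 1
  funext ω
  simp

section LocalSGD

variable {Ω : Type*} {M : ℕ}

structure IsScalarLocalSGD (K : ℕ) (g : ℝ → ℝ) (η : ℝ) (z u : ℕ → Fin M → Ω → ℝ) : Prop where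
  zero : ∀ m ω, u 0 m ω = 0
  succ : ∀ t m ω, u (t + 1) m ω =
    if (t + 1) % K = 0 then (M : ℝ)⁻¹ * ∑ m', (g (u t m' ω) - η * z t m' ω)
    else g (u t m ω) - η * z t m ω

abbrev noiseHistory (z : ℕ → Fin M → Ω → ℝ) (t : ℕ) : MeasurableSpace Ω :=
  ⨆ p ∈ {p : ℕ × Fin M | p.1 < t}, MeasurableSpace.comap (z p.1 p.2) inferInstance

lemma noiseHistory_mono (z : ℕ → Fin M → Ω → ℝ) {s t : ℕ} (h : s ≤ t) :
    noiseHistory z s ≤ noiseHistory z t :=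
  biSup_mono fun _ hp => lt_of_lt_of_le hp h

lemma measurable_noiseHistory_of_lt (z : ℕ → Fin M → Ω → ℝ) {s t : ℕ} (m : Fin M) (h : s < t) :
    Measurable[noiseHistory z t] (z s m) :=
  Measurable.of_comap_le <| le_iSup₂
    (f := fun (p : ℕ × Fin M) (_ : p.1 < t) => MeasurableSpace.comap (z p.1 p.2) _) (s, m) h

namespace IsScalarLocalSGD

variable {K : ℕ} {g : ℝ → ℝ} {η : ℝ} {z u : ℕ → Fin M → Ω → ℝ}

lemma sum_succ (hu : IsScalarLocalSGD K g η z u) (hM : M ≠ 0) (t : ℕ) (ω : Ω) :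
    ∑ m, u (t + 1) m ω = ∑ m, (g (u t m ω) - η * z t m ω) := by
  simp_rw [hu.succ]
  split_ifs
  · simp only [Finset.sum_const, Finset.card_univ, Fintype.card_fin, nsmul_eq_mul]
    field_simp
  · rfl

lemma measurable_noiseHistory_iterate (hu : IsScalarLocalSGD K g η z u) (hg : Measurable g)
    (t : ℕ) (m : Fin M) : Measurable[noiseHistory z t] (u t m) := by
  induction t generalizing m with
  | zero =>
    rw [funext (hu.zero m)]
    exact measurable_const
  | succ t ih =>
    have hstep : ∀ m', Measurable[noiseHistory z (t + 1)] fun ω => g (u t m' ω) - η * z t m' ω :=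
      fun m' => (hg.comp ((ih m').mono (noiseHistory_mono z t.le_succ) le_rfl)).sub
        ((measurable_noiseHistory_of_lt z m' t.lt_succ_self).const_mul η)
    rw [funext (hu.succ t m)]
    split_ifs
    · exact (Finset.measurable_sum _ fun m' _ => hstep m').const_mul _
    · exact hstep m

variable [MeasurableSpace Ω] {P : Measure Ω}

lemma indepFun (hu : IsScalarLocalSGD K g η z u) (hg : Measurable g)
    (hz : ∀ t m, Measurable (z t m)) (hiid : iIndepFun (fun p : ℕ × Fin M => z p.1 p.2) P)
    (t : ℕ) (m : Fin M) : IndepFun (u t m) (z t m) P := by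
  have hind := indep_iSup_of_disjoint (fun p => (hz p.1 p.2).comap_le)
    ((iIndepFun_iff_iIndep _ _ _).1 hiid) (S := {p | p.1 < t}) (T := {(t, m)}) (by simp)
  rw [iSup_singleton] at hind
  rw [IndepFun_iff_Indep]
  exact indep_of_indep_of_le_left hind (hu.measurable_noiseHistory_iterate hg t m).comap_le

lemma memLp [IsFiniteMeasure P] {p : ENNReal} {c : ℝ} (hu : IsScalarLocalSGD K g η z u)
    (hg : Measurable g) (hgc : ∀ v, |g v - c| ≤ |v - c|) (hz : ∀ t m, MemLp (z t m) p P)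
    (t : ℕ) (m : Fin M) : MemLp (u t m) p P := by
  induction t generalizing m with
  | zero =>
    rw [funext (hu.zero m)]
    exact MemLp.zero
  | succ t ih =>
    have hstep : ∀ m', MemLp (fun ω => g (u t m' ω) - η * z t m' ω) p P :=
      fun m' => ((ih m').comp_of_abs_sub_le hg hgc).sub ((hz t m').const_mul η)
    rw [funext (hu.succ t m)]
    split_ifs
    · exact (memLp_finsetSum _ fun m' _ => hstep m').const_mul _
    · exact hstep m

lemma sum_integral_succ (hu : IsScalarLocalSGD K g η z u) (hM : M ≠ 0) {t : ℕ}
    (hu_int : ∀ m, Integrable (u (t + 1) m) P)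
    (hg_int : ∀ m, Integrable (fun ω => g (u t m ω)) P)
    (hz_int : ∀ m, Integrable (z t m) P) (hz_mean : ∀ m, ∫ ω, z t m ω ∂P = 0) :
    ∑ m, ∫ ω, u (t + 1) m ω ∂P = ∑ m, ∫ ω, g (u t m ω) ∂P := by
  have hstep_int : ∀ m, Integrable (fun ω => g (u t m ω) - η * z t m ω) P :=
    fun m => (hg_int m).sub ((hz_int m).const_mul η)
  rw [← integral_finsetSum _ fun m _ => hu_int m]
  simp_rw [hu.sum_succ hM]
  rw [integral_finsetSum _ fun m _ => hstep_int m]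
  refine Finset.sum_congr rfl fun m _ => ?_
  rw [integral_sub (hg_int m) ((hz_int m).const_mul η), integral_const_mul, hz_mean,
    mul_zero, sub_zero]

end IsScalarLocalSGD

end LocalSGD

section HardInstance

def hardStep (L c η v : ℝ) : ℝ := v - η * (L * (v - c) + L * max (v - c) 0)

variable {L c η : ℝ}

lemma measurable_hardStep : Measurable (hardStep L c η) := by
  unfold hardStep
  fun_prop

lemma abs_hardStep_sub_le (h0 : 0 ≤ η * L) (h1 : η * L ≤ 1 / 2) (v : ℝ) :
    |hardStep L c η v - c| ≤ |v - c| := by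
  rcases le_total v c with hv | hv
  · have heq : hardStep L c η v - c = (1 - η * L) * (v - c) := by
      simp only [hardStep, max_eq_right (sub_nonpos.2 hv)]
      ring
    rw [heq, abs_mul, abs_of_nonneg (by linarith)]
    exact mul_le_of_le_one_left (abs_nonneg _) (by linarith)
  · have heq : hardStep L c η v - c = (1 - 2 * (η * L)) * (v - c) := by
      simp only [hardStep, max_eq_left (sub_nonneg.2 hv)]
      ring
    rw [heq, abs_mul, abs_of_nonneg (by linarith)]
    exact mul_le_of_le_one_left (abs_nonneg _) (by linarith)

lemma sub_smul_hardGrad_apply_two {μ H b : ℝ} (v : Fin 3 → ℝ) (w : ℝ) :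
    (v - η • hardGrad μ H L b c v w) 2 = hardStep L c η (v 2) - η * w := by
  simp only [Pi.sub_apply, Pi.smul_apply, smul_eq_mul, hardGrad, hardStep, Matrix.cons_val]
  ring

lemma isScalarLocalSGD_hardGrad {μ H b : ℝ} {K M : ℕ} {Ω : Type*} {z : ℕ → Fin M → Ω → ℝ}
    {x : ℕ → Fin M → Ω → (Fin 3 → ℝ)} (hx0 : ∀ m ω, x 0 m ω = 0)
    (hxup : ∀ t m ω, x (t + 1) m ω =
      if (t + 1) % K = 0 then
        (M : ℝ)⁻¹ • ∑ m' : Fin M,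
          (x t m' ω - η • hardGrad μ H L b c (x t m' ω) (z t m' ω))
      else x t m ω - η • hardGrad μ H L b c (x t m ω) (z t m ω)) :
    IsScalarLocalSGD K (hardStep L c η) η z fun t m ω => x t m ω 2 := by
  refine ⟨fun m ω => by simp [hx0], fun t m ω => ?_⟩
  rw [hxup]
  split_ifs <;>
    simp only [Pi.smul_apply, Finset.sum_apply, smul_eq_mul, sub_smul_hardGrad_apply_two]

variable {Ω : Type*} [MeasurableSpace Ω] {P : Measure Ω} [IsProbabilityMeasure P]

lemma sub_integral_hardStep {Y : Ω → ℝ} (hY : Integrable Y P) :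
    c - ∫ ω, hardStep L c η (Y ω) ∂P
      = (1 - η * L) * (c - ∫ ω, Y ω ∂P) + η * L * ∫ ω, max (Y ω - c) 0 ∂P := by
  have h1 : Integrable (fun ω => (1 - η * L) * (c - Y ω)) P :=
    ((integrable_const c).sub hY).const_mul _
  have h2 : Integrable (fun ω => η * L * max (Y ω - c) 0) P :=
    (hY.sub (integrable_const c)).pos_part.const_mul _
  have hpt : ∀ ω, hardStep L c η (Y ω)
      = c - ((1 - η * L) * (c - Y ω) + η * L * max (Y ω - c) 0) := fun ω => by
    simp only [hardStep]
    ring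
  have h12 : Integrable (fun ω => (1 - η * L) * (c - Y ω) + η * L * max (Y ω - c) 0) P :=
    h1.add h2
  simp_rw [hpt]
  rw [integral_sub (integrable_const c) h12, integral_add h1 h2, integral_const_mul,
    integral_const_mul, integral_sub (integrable_const c) hY]
  simp

lemma mul_sq_integral_le_integral {X : Ω → ℝ} (hX : MemLp X 2 P) (hL : 0 ≤ L) :
    L / 2 * (∫ ω, X ω ∂P) ^ 2 ≤ ∫ ω, L / 2 * (X ω ^ 2 + max (X ω) 0 ^ 2) ∂P := by
  have hvar : (∫ ω, X ω ∂P) ^ 2 ≤ ∫ ω, X ω ^ 2 ∂P := by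
    have := variance_nonneg X P
    rw [variance_eq_sub hX] at this
    simpa using this
  have hsq := hX.integrable_sq
  have hmax : Integrable (fun ω => max (X ω) 0 ^ 2) P :=
    hsq.mono' ((hX.aemeasurable.max aemeasurable_const).pow_const 2).aestronglyMeasurable <|
      ae_of_all _ fun ω => by
        rw [Real.norm_of_nonneg (sq_nonneg _)]
        rcases le_total (X ω) 0 with h | h <;> simp [h, sq_nonneg]
  rw [integral_const_mul, integral_add hsq hmax]
  have : 0 ≤ ∫ ω, max (X ω) 0 ^ 2 ∂P := integral_nonneg fun ω => sq_nonneg _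
  gcongr
  linarith

variable {M K : ℕ} {σ : ℝ} {z u : ℕ → Fin M → Ω → ℝ}

lemma IsScalarLocalSGD.memLp_hardStep (hu : IsScalarLocalSGD K (hardStep L c η) η z u)
    (hβ0 : 0 ≤ η * L) (hβ : η * L ≤ 1 / 2) (hz : ∀ t m, Measurable (z t m))
    (hlaw : ∀ t m, P.map (z t m) = twoPoint σ) (t : ℕ) (m : Fin M) : MemLp (u t m) 2 P :=
  hu.memLp measurable_hardStep (abs_hardStep_sub_le hβ0 hβ)
    (fun t m => memLp_of_map_eq_twoPoint (hz t m) (hlaw t m) 2) t m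

lemma IsScalarLocalSGD.isDeficitRecursion (hu : IsScalarLocalSGD K (hardStep L c η) η z u)
    (hM : M ≠ 0) (hβ0 : 0 ≤ η * L) (hβ : η * L ≤ 1 / 2) (hσ : σ ≠ 0)
    (hz : ∀ t m, Measurable (z t m)) (hlaw : ∀ t m, P.map (z t m) = twoPoint σ)
    (hiid : iIndepFun (fun p : ℕ × Fin M => z p.1 p.2) P) :
    IsDeficitRecursion K (η * L) (M * (η * σ)) (fun t => ∑ m, (c - ∫ ω, u t m ω ∂P))
      (fun t => ∑ m, ∫ ω, max (u t m ω - c) 0 ∂P) := by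
  have hgc := abs_hardStep_sub_le (c := c) hβ0 hβ
  have hL2 := hu.memLp_hardStep hβ0 hβ hz hlaw
  have hint : ∀ t m, Integrable (u t m) P := fun t m => (hL2 t m).integrable one_le_two
  have hstep_int : ∀ t m, Integrable (fun ω => hardStep L c η (u t m ω)) P := fun t m =>
    ((hL2 t m).comp_of_abs_sub_le measurable_hardStep hgc).integrable one_le_two
  have hsucc : ∀ t, ∑ m, (c - ∫ ω, u (t + 1) m ω ∂P)
      = ∑ m, (c - ∫ ω, hardStep L c η (u t m ω) ∂P) := fun t => by
    rw [Finset.sum_sub_distrib, Finset.sum_sub_distrib, hu.sum_integral_succ hM (hint (t + 1))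
      (hstep_int t) (fun m => (memLp_of_map_eq_twoPoint (hz t m) (hlaw t m) 1).integrable le_rfl)
      fun m => integral_eq_zero_of_map_eq_twoPoint (hz t m) (hlaw t m)]
  refine ⟨fun t => ?_, fun t => Finset.sum_nonneg fun m _ =>
    integral_nonneg fun ω => le_max_right _ _, ?_⟩
  · rw [hsucc, Finset.mul_sum, Finset.mul_sum, ← Finset.sum_add_distrib]
    exact Finset.sum_congr rfl fun m _ => sub_integral_hardStep (hint t m)
  rintro (_ | t) ht
  · exact absurd (Nat.zero_mod K) ht
  have hmachine : ∀ m, (η * σ - (c - ∫ ω, hardStep L c η (u t m ω) ∂P)) / 2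
      ≤ ∫ ω, max (u (t + 1) m ω - c) 0 ∂P := fun m => by
    have hYZ : IndepFun (fun ω => hardStep L c η (u t m ω) - c) (z t m) P :=
      (hu.indepFun measurable_hardStep hz hiid t m).comp (measurable_hardStep.sub_const c)
        measurable_id
    have h := le_integral_max_sub_mul_of_indepFun (Y := fun ω => hardStep L c η (u t m ω) - c)
      ((hstep_int t m).sub (integrable_const c))
      (hz t m) (hlaw t m) hYZ hσ η
    rw [integral_sub (hstep_int t m) (integrable_const c), integral_const] at h
    simp_rw [hu.succ t m, if_neg ht]
    convert h using 2
    · simp only [probReal_univ, smul_eq_mul, one_mul]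
      ring
    · simp_rw [sub_right_comm _ _ c]
  calc (M * (η * σ) - ∑ m, (c - ∫ ω, u (t + 1) m ω ∂P)) / 2
      = ∑ m, (η * σ - (c - ∫ ω, hardStep L c η (u t m ω) ∂P)) / 2 := by
        rw [hsucc, ← Finset.sum_div, Finset.sum_sub_distrib]
        simp
    _ ≤ _ := Finset.sum_le_sum fun m _ => hmachine m

lemma IsScalarLocalSGD.integral_average_sub_le (hu : IsScalarLocalSGD K (hardStep L c η) η z u)
    (hM : M ≠ 0) (hβ0 : 0 ≤ η * L) (hβ : η * L ≤ 1 / 2) (hη : 0 ≤ η) (hσ : 0 < σ) (hc : 0 ≤ c)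
    (hK : 2 ≤ K) (hz : ∀ t m, Measurable (z t m)) (hlaw : ∀ t m, P.map (z t m) = twoPoint σ)
    (hiid : iIndepFun (fun p : ℕ × Fin M => z p.1 p.2) P) {R : ℕ}
    (hcase : η * σ / 48 ≤ c ∨ 2 ≤ η * L * (K * R)) :
    ∫ ω, ((M : ℝ)⁻¹ * ∑ m, u (K * R) m ω - c) ∂P ≤ -(η * σ / 48) := by
  have hMpos : (0 : ℝ) < M := by positivity
  have hb0 : ∑ m, (c - ∫ ω, u 0 m ω ∂P) = M * c := by simp [hu.zero]
  have hdeficit := (hu.isDeficitRecursion hM hβ0 hβ hσ.ne' hz hlaw hiid).threshold_le_at_round_end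
    hβ0 hβ (by positivity) hK (by rw [hb0]; positivity)
    (hcase.imp_left fun h => by rw [hb0]; nlinarith)
  have hint : ∀ m, Integrable (u (K * R) m) P := fun m =>
    (hu.memLp_hardStep hβ0 hβ hz hlaw _ m).integrable one_le_two
  rw [Finset.sum_sub_distrib] at hdeficit
  rw [integral_sub ((integrable_finsetSum _ fun m _ => hint m).const_mul _) (integrable_const c),
    integral_const_mul, integral_finsetSum _ fun m _ => hint m]
  simp only [Finset.sum_const, Finset.card_univ, Fintype.card_fin, nsmul_eq_mul] at hdeficit
  rw [integral_const, probReal_univ, one_smul, inv_mul_eq_div, div_sub' hMpos.ne',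
    div_le_iff₀ hMpos]
  linarith

end HardInstance

/-- For the hard instance above with `c ≥ 0`, `K ≥ 2`, `M, R ≥ 1` and fixed
stepsize `0 < η ≤ 1/(2L)`, if `c ≥ ησ/48` or `η ≥ 2/(LRK)`, then the output `x̂` of local SGD
(the averaged iterate after the final round, initialized at `0`) satisfies
`E[(L/2)((x̂₃ − c)² + [x̂₃ − c]₊²)] ≥ Lη²σ²/4608`. -/
theorem local_sgd_third_coordinate_lower_bound
    (μ H L b c σ η : ℝ)
    (hL : 0 < L) (hη : 0 < η) (hσ : 0 < σ) (hc : 0 ≤ c) (hηL : η ≤ 1 / (2 * L))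
    (K M R : ℕ) (hK : 2 ≤ K) (hM : 1 ≤ M) (hR : 1 ≤ R)
    (hcase : η * σ / 48 ≤ c ∨ 2 / (L * R * K) ≤ η)
    (Ω : Type*) [MeasurableSpace Ω] (P : Measure Ω) [IsProbabilityMeasure P]
    (z : ℕ → Fin M → Ω → ℝ)
    (hzmeas : ∀ t m, Measurable (z t m))
    (hzlaw : ∀ t m, Measure.map (z t m) P = twoPoint σ)
    (hziid : iIndepFun (fun p : ℕ × Fin M => z p.1 p.2) P)
    (x : ℕ → Fin M → Ω → (Fin 3 → ℝ))
    (hx0 : ∀ m ω, x 0 m ω = 0)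
    (hxup : ∀ t m ω, x (t + 1) m ω =
      if (t + 1) % K = 0 then
        (M : ℝ)⁻¹ • ∑ m' : Fin M,
          (x t m' ω - η • hardGrad μ H L b c (x t m' ω) (z t m' ω))
      else x t m ω - η • hardGrad μ H L b c (x t m ω) (z t m ω)) :
    L * η ^ 2 * σ ^ 2 / 4608
      ≤ ∫ ω, L / 2 *
          ((((M : ℝ)⁻¹ • ∑ m : Fin M, x (K * R) m ω) 2 - c) ^ 2 +
            max (((M : ℝ)⁻¹ • ∑ m : Fin M, x (K * R) m ω) 2 - c) 0 ^ 2) ∂P := by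
  have hu := isScalarLocalSGD_hardGrad (z := z) hx0 hxup
  have hβ0 : 0 ≤ η * L := by positivity
  have hβ : η * L ≤ 1 / 2 := by
    rw [le_div_iff₀ (by positivity)] at hηL
    linarith
  have hcase' : η * σ / 48 ≤ c ∨ 2 ≤ η * L * (K * R) := hcase.imp_right fun h => by
    rw [div_le_iff₀ (by positivity)] at h
    linarith
  set X : Ω → ℝ := fun ω => (M : ℝ)⁻¹ * ∑ m, x (K * R) m ω 2 - c
  have hX : MemLp X 2 P := ((memLp_finsetSum _ fun m _ =>
    hu.memLp_hardStep hβ0 hβ hzmeas hzlaw (K * R) m).const_mul _).sub (memLp_const c)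
  have hmean : ∫ ω, X ω ∂P ≤ -(η * σ / 48) :=
    hu.integral_average_sub_le (by omega) hβ0 hβ hη.le hσ hc hK hzmeas hzlaw hziid hcase'
  calc L * η ^ 2 * σ ^ 2 / 4608 = L / 2 * (η * σ / 48) ^ 2 := by ring
    _ ≤ L / 2 * (∫ ω, X ω ∂P) ^ 2 :=
      mul_le_mul_of_nonneg_left (by nlinarith [mul_pos hη hσ]) (by positivity)
    _ ≤ ∫ ω, L / 2 * (X ω ^ 2 + max (X ω) 0 ^ 2) ∂P := mul_sq_integral_le_integral hX hL.le
    _ = _ := by simp [X, Finset.sum_apply]
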